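/- Let 𝔲 = (u_n)_{n≥0} be a ray in T = T_𝔛, let g ∈ Aut(T) be a 𝔲-generalised spinal element, and let k ∈ ℕ. Then the element ins_{u_k}((g|_{u_k})^{-1}) · g is finitary. -/

import Mathlib

namespace BranchPaper

universe u

/-- Vertices at level `n` of the rooted tree defined by the sequence of alphabets `X`:
strings `x₁ ⋯ x_n` with `x_{i+1} ∈ X i` (we index alphabets from `0`). -/
abbrev Vertex (X : ℕ → Type u) (n : ℕ) : Type u := ∀ i : Fin n, X (i : ℕ)

/-- The shifted sequence of alphabets `𝔛.σⁿ`. -/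
abbrev shift (X : ℕ → Type u) (n : ℕ) : ℕ → Type u := fun k => X (n + k)

variable {X : ℕ → Type u}

/-- Compatibility of a sequence of level permutations with truncation: this is precisely
the condition for the family to define an automorphism of the rooted tree. -/
def Compat (p : ∀ n, Equiv.Perm (Vertex X n)) : Prop :=
  ∀ (n : ℕ) (v : Vertex X (n + 1)), Fin.init (p (n + 1) v) = p n (Fin.init v)

/-- The automorphism group of the rooted tree `T_X`, realised as the subgroup of
`∏ₙ Sym(L(n))` of families of layer permutations compatible with truncation. -/
def treeAutGroup (X : ℕ → Type u) : Subgroup (∀ n, Equiv.Perm (Vertex X n)) where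
  carrier := {p | Compat p}
  one_mem' := fun _ _ => rfl
  mul_mem' := by
    intro a b ha hb n v
    show Fin.init (a (n + 1) (b (n + 1) v)) = a n (b n (Fin.init v))
    rw [ha, hb]
  inv_mem' := by
    intro a ha n v
    apply (a n).injective
    show a n (Fin.init ((a (n + 1))⁻¹ v)) = a n ((a n)⁻¹ (Fin.init v))
    rw [← ha n ((a (n + 1))⁻¹ v), Equiv.Perm.coe_inv, Equiv.Perm.coe_inv, Equiv.apply_symm_apply,
      Equiv.apply_symm_apply]

/-- `Aut(T_X)`. -/
abbrev TreeAut (X : ℕ → Type u) := ↥(treeAutGroup X)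

lemma mem_treeAutGroup {p : ∀ n, Equiv.Perm (Vertex X n)} : p ∈ treeAutGroup X ↔ Compat p :=
  Iff.rfl

lemma TreeAut.compat (g : TreeAut X) : Compat (g.1) := g.2

/-- The first `n` letters of a vertex of length `n + m`. -/
def front {n m : ℕ} (w : Vertex X (n + m)) : Vertex X n := fun i => w (Fin.castAdd m i)

/-- The last `m` letters of a vertex of length `n + m`, as a vertex of the shifted tree. -/
def back {n m : ℕ} (w : Vertex X (n + m)) : Vertex (shift X n) m := fun i => w (Fin.natAdd n i)

/-- Concatenation of a vertex of `T_X` with a vertex of the shifted tree. -/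
def append {n m : ℕ} (v : Vertex X n) (w : Vertex (shift X n) m) : Vertex X (n + m) :=
  Fin.addCases (motive := fun i => X (i : ℕ)) v w

@[simp] lemma front_append {n m : ℕ} (v : Vertex X n) (w : Vertex (shift X n) m) :
    front (append v w) = v := by
  funext i
  show Fin.addCases (motive := fun i => X (i : ℕ)) v w (Fin.castAdd m i) = v i
  exact Fin.addCases_left i

@[simp] lemma back_append {n m : ℕ} (v : Vertex X n) (w : Vertex (shift X n) m) :
    back (append v w) = w := by
  funext i
  show Fin.addCases (motive := fun i => X (i : ℕ)) v w (Fin.natAdd n i) = w i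
  exact Fin.addCases_right i

@[simp] lemma append_front_back {n m : ℕ} (w : Vertex X (n + m)) :
    append (front w) (back w) = w := by
  funext i
  induction i using Fin.addCases with
  | left i =>
      show Fin.addCases (motive := fun i => X (i : ℕ)) (front w) (back w) (Fin.castAdd m i)
        = w (Fin.castAdd m i)
      rw [Fin.addCases_left]
      rfl
  | right i =>
      show Fin.addCases (motive := fun i => X (i : ℕ)) (front w) (back w) (Fin.natAdd n i)
        = w (Fin.natAdd n i)
      rw [Fin.addCases_right]
      rfl

lemma init_append {n m : ℕ} (v : Vertex X n) (w : Vertex (shift X n) (m + 1)) :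
    Fin.init (n := n + m) (append (n := n) (m := m + 1) v w) = append v (Fin.init w) := by
  funext i
  induction i using Fin.addCases with
  | left i =>
      have h1 : Fin.addCases (motive := fun j => X (j : ℕ)) v w (Fin.castAdd (m + 1) i)
          = v i := Fin.addCases_left i
      have h2 : Fin.addCases (motive := fun j => X (j : ℕ)) v (Fin.init w) (Fin.castAdd m i)
          = v i := Fin.addCases_left i
      exact h1.trans h2.symm
  | right i =>
      have h1 : Fin.addCases (motive := fun j => X (j : ℕ)) v w (Fin.natAdd n i.castSucc)
          = w i.castSucc := Fin.addCases_right i.castSucc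
      have h2 : Fin.addCases (motive := fun j => X (j : ℕ)) v (Fin.init w) (Fin.natAdd n i)
          = Fin.init w i := Fin.addCases_right i
      exact h1.trans h2.symm

lemma front_act (g : TreeAut X) (n : ℕ) :
    ∀ (m : ℕ) (w : Vertex X (n + m)), front (g.1 (n + m) w) = g.1 n (front w) := by
  intro m
  induction m with
  | zero => intro w; rfl
  | succ m ih =>
      intro w
      calc front (g.1 (n + (m + 1)) w)
          = front (m := m) (Fin.init (n := n + m) (g.1 (n + m + 1) w)) := rfl
        _ = front (m := m) (g.1 (n + m) (Fin.init (n := n + m) w)) := by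
              rw [g.compat (n + m) w]
        _ = g.1 n (front (Fin.init (n := n + m) w)) := ih _
        _ = g.1 n (front w) := rfl

lemma coe_inv_apply (g : TreeAut X) (n : ℕ) (v : Vertex X n) :
    (g⁻¹).1 n v = (g.1 n)⁻¹ v := rfl

/-- The section `g|_v` of a tree automorphism at a vertex `v`, an automorphism of the
shifted tree, characterised by `g (v * w) = g v * (g|_v) w`. -/
def sectionAt (g : TreeAut X) {n : ℕ} (v : Vertex X n) : TreeAut (shift X n) :=
  ⟨fun m =>
    { toFun := fun w => back (g.1 (n + m) (append v w))
      invFun := fun w => back ((g⁻¹).1 (n + m) (append (g.1 n v) w))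
      left_inv := by
        intro w
        have hfront : front (g.1 (n + m) (append v w)) = g.1 n v := by
          rw [front_act, front_append]
        have key := append_front_back (g.1 (n + m) (append v w))
        rw [hfront] at key
        show back ((g⁻¹).1 (n + m) (append (g.1 n v) (back (g.1 (n + m) (append v w))))) = w
        rw [key]
        have h2 : (g⁻¹).1 (n + m) (g.1 (n + m) (append v w)) = append v w := by
          show (g.1 (n + m))⁻¹ (g.1 (n + m) (append v w)) = append v w
          exact Equiv.symm_apply_apply _ _
        rw [h2, back_append]
      right_inv := by
        intro w
        have hfront : front ((g⁻¹).1 (n + m) (append (g.1 n v) w)) = v := by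
          rw [front_act, front_append]
          show (g.1 n)⁻¹ (g.1 n v) = v
          exact Equiv.symm_apply_apply _ _
        have key := append_front_back ((g⁻¹).1 (n + m) (append (g.1 n v) w))
        rw [hfront] at key
        show back (g.1 (n + m) (append v (back ((g⁻¹).1 (n + m) (append (g.1 n v) w))))) = w
        rw [key]
        have h2 : g.1 (n + m) ((g⁻¹).1 (n + m) (append (g.1 n v) w)) = append (g.1 n v) w := by
          show g.1 (n + m) ((g.1 (n + m))⁻¹ (append (g.1 n v) w)) = append (g.1 n v) w
          exact Equiv.apply_symm_apply _ _
        rw [h2, back_append] },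
   by
    intro m w
    have h1 : Fin.init (n := n + m) (g.1 (n + m + 1) (append (n := n) (m := m + 1) v w))
        = g.1 (n + m) (Fin.init (n := n + m) (append (n := n) (m := m + 1) v w)) :=
      g.compat (n + m) (append (n := n) (m := m + 1) v w)
    calc Fin.init (back (n := n) (m := m + 1)
            (g.1 (n + (m + 1)) (append (n := n) (m := m + 1) v w)))
        = back (m := m) (Fin.init (n := n + m)
            (g.1 (n + m + 1) (append (n := n) (m := m + 1) v w))) := rfl
      _ = back (m := m) (g.1 (n + m)
            (Fin.init (n := n + m) (append (n := n) (m := m + 1) v w))) := by rw [h1]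
      _ = back (g.1 (n + m) (append v (Fin.init w))) := by rw [init_append v w]⟩

/-- An automorphism is finitary if all sections at some level are trivial. -/
def Finitary (g : TreeAut X) : Prop := ∃ n : ℕ, ∀ v : Vertex X n, sectionAt g v = 1

/-- `v` is a prefix of `w`. -/
def IsPrefixOf {n k : ℕ} (v : Vertex X n) (w : Vertex X k) : Prop :=
  ∃ h : n ≤ k, ∀ i : Fin n, w (Fin.castLE h i) = v i

/-- `g` fixes every vertex which does not have `v` as a prefix. -/
def FixesOutside (g : TreeAut X) {n : ℕ} (v : Vertex X n) : Prop :=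
  ∀ (k : ℕ) (w : Vertex X k), ¬ IsPrefixOf v w → g.1 k w = w

/-- A group of tree automorphisms acts spherically transitively if it acts transitively
on every layer. -/
def SphericallyTransitive (G : Subgroup (TreeAut X)) : Prop :=
  ∀ (n : ℕ) (v w : Vertex X n), ∃ g ∈ G, g.1 n v = w

/-- A group of tree automorphisms is layered if for every `g ∈ G` and every vertex `v`,
the insertion `ins_v (g|_v)` (the unique automorphism fixing everything outside the
subtree at `v` and with section `g|_v` at `v`) again belongs to `G`. -/
def Layered (G : Subgroup (TreeAut X)) : Prop :=
  ∀ g ∈ G, ∀ (n : ℕ) (v : Vertex X n),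
    ∃ h : TreeAut X, h ∈ G ∧ FixesOutside h v ∧ sectionAt h v = sectionAt g v

/-- The rigid vertex stabiliser of `v` in `G`. -/
def rist (G : Subgroup (TreeAut X)) {n : ℕ} (v : Vertex X n) : Subgroup (TreeAut X) where
  carrier := {g | g ∈ G ∧ FixesOutside g v}
  one_mem' := ⟨G.one_mem, fun _ _ _ => rfl⟩
  mul_mem' := by
    rintro a b ⟨haG, ha⟩ ⟨hbG, hb⟩
    refine ⟨G.mul_mem haG hbG, fun k w hw => ?_⟩
    show a.1 k (b.1 k w) = w
    rw [hb k w hw, ha k w hw]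
  inv_mem' := by
    rintro a ⟨haG, ha⟩
    refine ⟨G.inv_mem haG, fun k w hw => ?_⟩
    apply (a.1 k).injective
    show a.1 k ((a.1 k)⁻¹ w) = a.1 k w
    rw [Equiv.Perm.coe_inv, Equiv.apply_symm_apply, ha k w hw]

/-- The rigid layer stabiliser `Rist_G(n)`, the subgroup generated by the rigid vertex
stabilisers of the vertices in layer `n`. -/
def RistL (G : Subgroup (TreeAut X)) (n : ℕ) : Subgroup (TreeAut X) :=
  Subgroup.closure (⋃ v : Vertex X n, (rist G v : Set (TreeAut X)))

/-- A ray in the rooted tree. -/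
def IsRay (u : ∀ n, Vertex X n) : Prop := ∀ n, Fin.init (u (n + 1)) = u n

/-- A `𝔲`-generalised spinal element: all sections away from the ray are finitary. -/
def GeneralisedSpinal (u : ∀ n, Vertex X n) (g : TreeAut X) : Prop :=
  ∀ (n : ℕ) (v : Vertex X n), v ≠ u n → Finitary (sectionAt g v)

section Portrait

/-- The action on layers induced by a portrait (a labelling of the vertices by
permutations of the corresponding alphabets). -/
def portraitAct (L : ∀ n, Vertex X n → Equiv.Perm (X n)) : ∀ n, Vertex X n → Vertex X n
  | 0, v => v
  | (n + 1), v =>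
      Fin.snoc (portraitAct L n (Fin.init v)) (L n (Fin.init v) (v (Fin.last n)))

lemma portraitAct_injective (L : ∀ n, Vertex X n → Equiv.Perm (X n)) :
    ∀ n, Function.Injective (portraitAct L n)
  | 0 => fun _ _ h => h
  | (n + 1) => by
      intro a b h
      simp only [portraitAct] at h
      have hinit : Fin.init a = Fin.init b := by
        apply portraitAct_injective L n
        have := congrArg Fin.init h
        simpa [Fin.init_snoc] using this
      have hlast : a (Fin.last n) = b (Fin.last n) := by
        have h2 := congrFun h (Fin.last n)
        rw [Fin.snoc_last, Fin.snoc_last, hinit] at h2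
        exact (L n (Fin.init b)).injective h2
      calc a = Fin.snoc (Fin.init a) (a (Fin.last n)) := (Fin.snoc_init_self a).symm
        _ = Fin.snoc (Fin.init b) (b (Fin.last n)) := by rw [hinit, hlast]
        _ = b := Fin.snoc_init_self b

/-- The tree automorphism determined by a portrait. -/
noncomputable def ofPortrait [∀ k, Finite (X k)] (L : ∀ n, Vertex X n → Equiv.Perm (X n)) :
    TreeAut X :=
  ⟨fun n => Equiv.ofBijective (portraitAct L n)
      (Finite.injective_iff_bijective.mp (portraitAct_injective L n)),
   by
    intro n v
    show Fin.init (portraitAct L (n + 1) v) = portraitAct L n (Fin.init v)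
    simp [portraitAct, Fin.init_snoc]⟩

end Portrait

section Construction

variable (S : ℕ → Type u)

/-- The spinal automorphism determined by a sequence `c` of group elements: it has the
rooted permutation induced by `c k` at the vertex `u_k x_{k+1}` and trivial label
everywhere else. -/
noncomputable def spinalAut [∀ k, Finite (X k)] [∀ n, Group (S n)]
    [∀ n, MulAction (S n) (X n)] (u : ∀ n, Vertex X n) (x : ∀ n, X n)
    (c : ∀ n, S (n + 1)) : TreeAut X :=
  ofPortrait (fun n => match n with
    | 0 => fun _ => 1
    | (k + 1) => fun v =>
        haveI := Classical.propDecidable (v = Fin.snoc (u k) (x k))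
        if v = Fin.snoc (u k) (x k) then MulAction.toPerm (c k) else 1)

/-- The rooted automorphism induced by an element acting on the first alphabet. -/
noncomputable def rootedAut (X : ℕ → Type u) [∀ k, Finite (X k)] {R : Type*} [Group R]
    [MulAction R (X 0)] (s : R) : TreeAut X :=
  ofPortrait (fun n => match n with
    | 0 => fun _ => MulAction.toPerm s
    | (_ + 1) => fun _ => 1)

/-- The group `Fin_𝔖(T)` of finitary automorphisms all of whose labels lie in the images
of the groups `S n` acting on the alphabets, described as a set. -/
def finSet (X : ℕ → Type u) (S : ℕ → Type u) [∀ n, Group (S n)]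
    [∀ n, MulAction (S n) (X n)] : Set (TreeAut X) :=
  {g | Finitary g ∧ ∀ (n : ℕ) (v : Vertex X n), ∃ s : S n, ∀ y : X n,
      g.1 (n + 1) (Fin.snoc v y) (Fin.last n) = s • y}

variable {G : Type u} [Group G]

/-- The branch group `Γ` of the construction. -/
noncomputable def gammaGroup [∀ k, Finite (X k)] [∀ n, Group (S n)]
    [∀ n, MulAction (S n) (X n)] (φ : G →* ∀ n, S (n + 1))
    (u : ∀ n, Vertex X n) (x : ∀ n, X n) : Subgroup (TreeAut X) :=
  Subgroup.closure
    (Set.range (fun s : S 0 => rootedAut X s) ∪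
     Set.range (fun g : G => spinalAut S u x (fun n => φ g n)))

/-- The subgroup `Δ(H) = ⟨Fin_𝔖(T) ∪ {s_h : h ∈ H}⟩`. -/
noncomputable def deltaGroup [∀ k, Finite (X k)] [∀ n, Group (S n)]
    [∀ n, MulAction (S n) (X n)] (φ : G →* ∀ n, S (n + 1))
    (u : ∀ n, Vertex X n) (x : ∀ n, X n) (H : Subgroup G) : Subgroup (TreeAut X) :=
  Subgroup.closure
    (finSet X S ∪ ((fun g : G => spinalAut S u x (fun n => φ g n)) '' (H : Set G)))

end Construction

section Statement15Aux

variable {X : ℕ → Type u}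

lemma sectionAt_eq_one_iff {h : TreeAut X} {n : ℕ} {v : Vertex X n} :
    sectionAt h v = 1 ↔ ∀ (m : ℕ) (w : Vertex (shift X n) m),
      back (h.1 (n + m) (append v w)) = w := by
  constructor
  · intro H m w
    have h1 : (sectionAt h v).1 m w = (1 : TreeAut (shift X n)).1 m w := by rw [H]
    exact h1
  · intro H
    apply Subtype.ext
    funext m
    apply Equiv.ext
    intro w
    exact H m w

lemma sectionAt_one {n : ℕ} (v : Vertex X n) : sectionAt (1 : TreeAut X) v = 1 :=
  sectionAt_eq_one_iff.mpr fun m w => by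
    show back (append v w) = w
    exact back_append v w

lemma finitary_one : Finitary (1 : TreeAut X) := ⟨0, fun v => sectionAt_one v⟩

/-- `h` fixes all coordinates with index at least `n`. -/
def FixedTail (h : TreeAut X) (n : ℕ) : Prop :=
  ∀ (L : ℕ) (w : Vertex X L) (i : Fin L), n ≤ (i : ℕ) → h.1 L w i = w i

lemma fixedTail_of_sections {h : TreeAut X} {n : ℕ}
    (H : ∀ v : Vertex X n, sectionAt h v = 1) : FixedTail h n := by
  intro L w i hi
  obtain ⟨m, rfl⟩ : ∃ m, L = n + m := ⟨L - n, by have := i.isLt; omega⟩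
  have h1 : back (h.1 (n + m) (append (front w) (back w))) = back w :=
    sectionAt_eq_one_iff.mp (H (front w)) m (back w)
  rw [append_front_back] at h1
  obtain ⟨j, hij⟩ : ∃ j : Fin m, Fin.natAdd n j = i :=
    ⟨⟨(i : ℕ) - n, by have := i.isLt; omega⟩,
      Fin.ext (by show n + ((i : ℕ) - n) = (i : ℕ); omega)⟩
  have h2 := congrFun h1 j
  have h3 : h.1 (n + m) w (Fin.natAdd n j) = w (Fin.natAdd n j) := h2
  rw [hij] at h3
  exact h3

lemma sections_of_fixedTail {h : TreeAut X} {n : ℕ} (H : FixedTail h n) :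
    ∀ v : Vertex X n, sectionAt h v = 1 := by
  intro v
  rw [sectionAt_eq_one_iff]
  intro m w
  funext j
  have h1 : h.1 (n + m) (append v w) (Fin.natAdd n j) = append v w (Fin.natAdd n j) :=
    H (n + m) (append v w) (Fin.natAdd n j) (by show n ≤ n + (j : ℕ); omega)
  calc back (h.1 (n + m) (append v w)) j
      = append v w (Fin.natAdd n j) := h1
    _ = back (append v w) j := rfl
    _ = w j := congrFun (back_append v w) j

lemma finitary_iff_fixedTail {h : TreeAut X} : Finitary h ↔ ∃ n, FixedTail h n :=
  ⟨fun ⟨n, H⟩ => ⟨n, fixedTail_of_sections H⟩, fun ⟨n, H⟩ => ⟨n, sections_of_fixedTail H⟩⟩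

lemma sectionAt_mul (a b : TreeAut X) {n : ℕ} (v : Vertex X n) :
    sectionAt (a * b) v = sectionAt a (b.1 n v) * sectionAt b v := by
  apply Subtype.ext; funext m; apply Equiv.ext; intro w
  show back ((a * b).1 (n + m) (append v w))
      = back (a.1 (n + m) (append (b.1 n v) (back (b.1 (n + m) (append v w)))))
  have h1 : append (b.1 n v) (back (b.1 (n + m) (append v w))) = b.1 (n + m) (append v w) := by
    conv_rhs => rw [← append_front_back (b.1 (n + m) (append v w))]
    rw [front_act b n m (append v w), front_append]
  rw [h1]
  rfl

section Insertion

open scoped Classical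

variable {k : ℕ} (uk : Vertex X k) (h : TreeAut (shift X k))

/-- The core of the insertion automorphism at level `k + m`. -/
noncomputable def corePerm (m : ℕ) : Equiv.Perm (Vertex X (k + m)) where
  toFun w := if front w = uk then append uk (h.1 m (back w)) else w
  invFun w := if front w = uk then append uk ((h⁻¹).1 m (back w)) else w
  left_inv w := by
    dsimp only
    by_cases hw : front w = uk
    · rw [if_pos hw, if_pos (front_append uk (h.1 m (back w))), back_append]
      have h1 : (h⁻¹).1 m (h.1 m (back w)) = back w := by
        rw [coe_inv_apply]
        exact Equiv.symm_apply_apply _ _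
      rw [h1, ← hw, append_front_back]
    · rw [if_neg hw, if_neg hw]
  right_inv w := by
    dsimp only
    by_cases hw : front w = uk
    · rw [if_pos hw, if_pos (front_append uk ((h⁻¹).1 m (back w))), back_append]
      have h1 : h.1 m ((h⁻¹).1 m (back w)) = back w := by
        rw [coe_inv_apply]
        exact Equiv.apply_symm_apply _ _
      rw [h1, ← hw, append_front_back]
    · rw [if_neg hw, if_neg hw]

lemma corePerm_zero : corePerm uk h 0 = 1 := by
  apply Equiv.ext
  intro w
  show (if front w = uk then append uk (h.1 0 (back w)) else w) = w
  by_cases hw : front w = uk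
  · rw [if_pos hw]
    have hb : h.1 0 (back w) = back w := funext fun i => i.elim0
    rw [hb, ← hw, append_front_back]
  · rw [if_neg hw]

/-- Reindexing vertices along an equality of levels. -/
def reindexV {a b : ℕ} (e : a = b) : Vertex X a ≃ Vertex X b where
  toFun w i := w (Fin.cast e.symm i)
  invFun w i := w (Fin.cast e i)
  left_inv _ := rfl
  right_inv _ := rfl

lemma reindexV_conj_eval {m₁ m₂ : ℕ} (hmm : m₁ = m₂) (e : k + m₁ = k + m₂)
    (p : ∀ j, Equiv.Perm (Vertex X (k + j))) (w : Vertex X (k + m₂)) :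
    reindexV e (p m₁ ((reindexV e).symm w)) = p m₂ w := by
  subst hmm; rfl

/-- Layer permutations of the insertion automorphism. -/
noncomputable def ePerm : ∀ L, Equiv.Perm (Vertex X L) := fun L =>
  if hL : k ≤ L then
    ((reindexV (Nat.add_sub_cancel' hL)).symm.trans
      ((corePerm uk h (L - k)).trans (reindexV (Nat.add_sub_cancel' hL))))
  else 1

lemma ePerm_lt (L : ℕ) (hL : L < k) : ePerm uk h L = 1 := by
  simp only [ePerm]
  rw [dif_neg (by omega)]

lemma ePerm_eval (m : ℕ) (w : Vertex X (k + m)) :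
    ePerm uk h (k + m) w = corePerm uk h m w := by
  have hL : k ≤ k + m := Nat.le_add_right k m
  simp only [ePerm]
  rw [dif_pos hL]
  exact reindexV_conj_eval (show k + m - k = m by omega) (Nat.add_sub_cancel' hL)
    (corePerm uk h) w

lemma corePerm_compat (m : ℕ) (w : Vertex X (k + (m + 1))) :
    Fin.init (corePerm uk h (m + 1) w) = corePerm uk h m (Fin.init w) := by
  have hfront : front (m := m) (Fin.init (n := k + m) w) = front (m := m + 1) w := rfl
  simp only [corePerm, Equiv.coe_fn_mk]
  by_cases hw : front (m := m + 1) w = uk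
  · rw [if_pos hw, if_pos (hfront.trans hw)]
    rw [init_append uk (h.1 (m + 1) (back w)), h.compat m (back w)]
    rfl
  · rw [if_neg hw, if_neg (fun hc => hw (hfront.symm.trans hc))]

/-- The insertion automorphism `ins_{uk}(h)`. -/
noncomputable def insAut : TreeAut X :=
  ⟨fun L => ePerm uk h L, by
    intro L w
    show Fin.init ((ePerm uk h (L + 1)) w) = (ePerm uk h L) (Fin.init w)
    rcases Nat.lt_or_ge L k with hk | hk
    · have hfix : ePerm uk h (L + 1) w = w := by
        rcases Nat.lt_or_ge (L + 1) k with h1 | h1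
        · rw [ePerm_lt uk h (L + 1) h1]; rfl
        · have hk2 : L + 1 = k := by omega
          subst hk2
          have h3 := ePerm_eval uk h 0 w
          rw [corePerm_zero] at h3
          exact h3
      rw [hfix, ePerm_lt uk h L hk]
      rfl
    · obtain ⟨m, rfl⟩ : ∃ m, L = k + m := ⟨L - k, by omega⟩
      refine (congrArg Fin.init (ePerm_eval uk h (m + 1) w)).trans ?_
      refine Eq.trans ?_ (ePerm_eval uk h m (Fin.init w)).symm
      exact corePerm_compat uk h m w⟩

lemma insAut_fixesOutside : FixesOutside (insAut uk h) uk := by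
  intro L w hw
  show ePerm uk h L w = w
  rcases Nat.lt_or_ge L k with h1 | h1
  · rw [ePerm_lt uk h L h1]; rfl
  · obtain ⟨m, rfl⟩ : ∃ m, L = k + m := ⟨L - k, by omega⟩
    rw [ePerm_eval uk h m w]
    simp only [corePerm, Equiv.coe_fn_mk]
    have hc : ¬ front w = uk := fun hc => hw ⟨Nat.le_add_right k m, fun i => congrFun hc i⟩
    rw [if_neg hc]

lemma insAut_section : sectionAt (insAut uk h) uk = h := by
  apply Subtype.ext; funext m; apply Equiv.ext; intro w
  show back ((ePerm uk h (k + m)) (append uk w)) = h.1 m w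
  rw [ePerm_eval uk h m (append uk w)]
  simp only [corePerm, Equiv.coe_fn_mk]
  rw [if_pos (front_append uk w), back_append, back_append]

end Insertion

end Statement15Aux


/-- For a `𝔲`-generalised spinal element `g` and `k ∈ ℕ`, the difference
`ins_{u_k}((g|_{u_k})⁻¹) · g` is finitary.  The insertion `ins_{u_k}((g|_{u_k})⁻¹)` is
characterised as the automorphism fixing everything outside the subtree at `u_k` and
having section `(g|_{u_k})⁻¹` there; such an element exists and, composed with `g`,
is finitary. -/
theorem statement15 (X : ℕ → Type) [∀ n, Finite (X n)] (hX2 : ∀ n, 2 ≤ Nat.card (X n))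
    (u : ∀ n, Vertex X n) (hu : IsRay u)
    (g : TreeAut X) (hg : GeneralisedSpinal u g) (k : ℕ) :
    (∃ e : TreeAut X, FixesOutside e (u k) ∧ sectionAt e (u k) = (sectionAt g (u k))⁻¹) ∧
    (∀ e : TreeAut X, FixesOutside e (u k) → sectionAt e (u k) = (sectionAt g (u k))⁻¹ →
      Finitary (g * e)) := by
  classical
  constructor
  · exact ⟨insAut (u k) (sectionAt g (u k))⁻¹,
      insAut_fixesOutside (u k) (sectionAt g (u k))⁻¹,
      insAut_section (u k) (sectionAt g (u k))⁻¹⟩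
  intro e he hse
  have heuk : e.1 k (u k) = u k := by
    by_contra hne
    have hnp : ¬ IsPrefixOf (u k) (e.1 k (u k)) := by
      rintro ⟨hle, hp⟩
      exact hne (funext fun i => hp i)
    have h2 := he k (e.1 k (u k)) hnp
    exact hne ((e.1 k).injective h2)
  have hev : ∀ v : Vertex X k, v ≠ u k → e.1 k v = v := fun v hv =>
    he k v (by rintro ⟨hle, hp⟩; exact hv (funext fun i => hp i))
  have hsec_e_off : ∀ v : Vertex X k, v ≠ u k → sectionAt e v = 1 := by
    intro v hv
    rw [sectionAt_eq_one_iff]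
    intro m w
    have hnp : ¬ IsPrefixOf (u k) (append v w) := by
      rintro ⟨hle, hp⟩
      apply hv
      funext i
      have h3 : append v w (Fin.castAdd m i) = v i := congrFun (front_append v w) i
      exact h3.symm.trans (hp i)
    rw [he (k + m) (append v w) hnp, back_append]
  have hsections : ∀ v : Vertex X k, Finitary (sectionAt (g * e) v) := by
    intro v
    rw [sectionAt_mul]
    by_cases hv : v = u k
    · subst hv
      rw [heuk, hse, mul_inv_cancel]
      exact finitary_one
    · rw [hsec_e_off v hv, mul_one, hev v hv]
      exact hg k v hv
  have hch : ∀ v : Vertex X k, ∃ n, FixedTail (sectionAt (g * e) v) n := fun v =>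
    finitary_iff_fixedTail.mp (hsections v)
  choose nv hnv using hch
  haveI : Finite (Vertex X k) := inferInstance
  haveI := Fintype.ofFinite (Vertex X k)
  obtain ⟨M, hM⟩ : ∃ M, ∀ v : Vertex X k, nv v ≤ M :=
    ⟨Finset.univ.sup nv, fun v => Finset.le_sup (Finset.mem_univ v)⟩
  rw [finitary_iff_fixedTail]
  refine ⟨k + M, ?_⟩
  intro L w i hi
  obtain ⟨m, rfl⟩ : ∃ m, L = k + m := ⟨L - k, by have := i.isLt; omega⟩
  obtain ⟨j, hij, hjM⟩ : ∃ j : Fin m, Fin.natAdd k j = i ∧ M ≤ (j : ℕ) :=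
    ⟨⟨(i : ℕ) - k, by have := i.isLt; omega⟩,
      Fin.ext (by show k + ((i : ℕ) - k) = (i : ℕ); omega),
      by show M ≤ (i : ℕ) - k; omega⟩
  have h1 := hnv (front w) m (back w) j (le_trans (hM (front w)) hjM)
  have h2 : (g * e).1 (k + m) (append (front w) (back w)) (Fin.natAdd k j)
      = w (Fin.natAdd k j) := h1
  rw [append_front_back] at h2
  rw [hij] at h2
  exact h2

end BranchPaper
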